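/- arXiv:1001.0194 — 5 statements merged into one kernel-verified Lean document; each statement's English description precedes it below -/
import Mathlib

section
/- Let μ be a singular cardinal, let (⟨μ_i : i < cf(μ)⟩, ⟨f_α : α < μ⁺⟩) be a scale for μ, and let A ⊆ μ⁺ be unbounded. Then for all sufficiently large i < cf(μ) (that is, there is i* < cf(μ) such that for all i with i* ≤ i < cf(μ)), the set of ξ < μ_i for which {α ∈ A : f_α(i) = ξ} is unbounded in μ⁺ is itself unbounded in μ_i. -/
noncomputable section

open Set

/-- The successor cardinal of `mu`, as an ordinal. -/
def sucOrd (mu : Cardinal) : Ordinal := (Order.succ mu).ord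

/-- The cofinality of `mu`, as an ordinal. -/
def cofOrd (mu : Cardinal) : Ordinal := (Ordinal.cof mu.ord).ord

/-- `mu` is a singular cardinal: infinite, with cofinality smaller than itself. -/
def IsSingular (mu : Cardinal) : Prop :=
  Cardinal.aleph0 ≤ mu ∧ Ordinal.cof mu.ord < mu

/-- `C` is unbounded below `lam`. -/
def UnbddIn (C : Set Ordinal) (lam : Ordinal) : Prop :=
  ∀ x < lam, ∃ y ∈ C, x ≤ y ∧ y < lam

/-- `C` is closed below `lam`: any accumulation point below `lam` belongs to `C`. -/
def ClosedIn (C : Set Ordinal) (lam : Ordinal) : Prop :=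
  ∀ δ, δ < lam → 0 < δ → (∀ x < δ, ∃ y ∈ C, x < y ∧ y < δ) → δ ∈ C

/-- `C` is a closed unbounded subset of `lam`. -/
def IsClubIn (C : Set Ordinal) (lam : Ordinal) : Prop :=
  C ⊆ Set.Iio lam ∧ ClosedIn C lam ∧ UnbddIn C lam

/-- `S` is a stationary subset of `lam`: it meets every closed unbounded subset of `lam`. -/
def IsStatIn (S : Set Ordinal) (lam : Ordinal) : Prop :=
  S ⊆ Set.Iio lam ∧ ∀ C, IsClubIn C lam → (S ∩ C).Nonempty

/-- The set of ordinals `t` has cardinality `< kappa`. -/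
def CardLT (t : Set Ordinal) (kappa : Cardinal) : Prop :=
  (Cardinal.mk ↥t : Cardinal.{1}) < Cardinal.lift.{1, 0} kappa

/-- `c` witnesses Shelah's principle `pr₁(μ⁺, μ⁺, σ, cf μ)`: for every sequence
`⟨t_α : α < μ⁺⟩` of pairwise disjoint subsets of `μ⁺`, each of size `< cf μ`, and every
color `ε < σ`, there are `α < β < μ⁺` with `c` constantly `ε` on pairs from `t_α × t_β`. -/
def Pr1With (mu sigma : Cardinal) (c : Ordinal → Ordinal → Ordinal) : Prop :=
  (∀ a b, a < b → b < sucOrd mu → c a b < sigma.ord) ∧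
  ∀ t : Ordinal → Set Ordinal,
    (∀ a, a < sucOrd mu → t a ⊆ Set.Iio (sucOrd mu)) →
    (∀ a b, a < sucOrd mu → b < sucOrd mu → a ≠ b → Disjoint (t a) (t b)) →
    (∀ a, a < sucOrd mu → CardLT (t a) (Ordinal.cof mu.ord)) →
    ∀ ε, ε < sigma.ord →
      ∃ α β, α < β ∧ β < sucOrd mu ∧
        ∀ ξ ∈ t α, ∀ ζ ∈ t β, c (min ξ ζ) (max ξ ζ) = ε

/-- Shelah's principle `pr₁(μ⁺, μ⁺, σ, cf μ)`. -/
def Pr1 (mu sigma : Cardinal) : Prop := ∃ c, Pr1With mu sigma c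

/-- `(mus, f)` is a scale for the singular cardinal `mu`. -/
structure IsScale (mu : Cardinal) (mus : Ordinal → Cardinal)
    (f : Ordinal → Ordinal → Ordinal) : Prop where
  regular : ∀ i, i < cofOrd mu → (mus i).IsRegular
  strictMono : ∀ i j, i < j → j < cofOrd mu → mus i < mus j
  le_mu : ∀ i, i < cofOrd mu → mus i ≤ mu
  unbdd : ∀ θ, θ < mu → ∃ i, i < cofOrd mu ∧ θ < mus i
  cof_lt : Ordinal.cof mu.ord < mus 0
  f_lt : ∀ α, α < sucOrd mu → ∀ i, i < cofOrd mu → f α i < (mus i).ord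
  f_mono : ∀ α β, α < β → β < sucOrd mu →
    ∃ i0, i0 < cofOrd mu ∧ ∀ i, i0 ≤ i → i < cofOrd mu → f α i < f β i
  f_cofinal : ∀ g : Ordinal → Ordinal, (∀ i, i < cofOrd mu → g i < (mus i).ord) →
    ∃ α, α < sucOrd mu ∧ ∃ i0, i0 < cofOrd mu ∧ ∀ i, i0 ≤ i → i < cofOrd mu → g i < f α i

/-- The minimal walk from `b` down to `a` along the C-sequence `e`:
`walk e a b 0 = b` and `walk e a b (n+1) = min (e (walk e a b n) \ a)`,
staying at `a` once it is reached. -/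
def walk (e : Ordinal → Set Ordinal) (a b : Ordinal) : ℕ → Ordinal
  | 0 => b
  | n + 1 => if walk e a b n = a then a else sInf (e (walk e a b n) ∩ Set.Ici a)

/-- `ρ₂(a,b)`: the length of the minimal walk from `b` to `a`, i.e. the least `n`
with `walk e a b n = a`. -/
def rho2 (e : Ordinal → Set Ordinal) (a b : Ordinal) : ℕ :=
  sInf {n : ℕ | walk e a b n = a}

/-- `β_i⁻(a,b)`: zero for `i = 0`, and `sup (e_{β_j(a,b)} ∩ a)` for `i = j+1`. -/
def walkLow (e : Ordinal → Set Ordinal) (a b : Ordinal) : ℕ → Ordinal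
  | 0 => 0
  | j + 1 => sSup (e (walk e a b j) ∩ Set.Iio a)

/-- `γ(a,b) = β_{ρ₂(a,b)-1}(a,b)`, the last step before the walk reaches `a`. -/
def gammaW (e : Ordinal → Set Ordinal) (a b : Ordinal) : Ordinal :=
  walk e a b (rho2 e a b - 1)

/-- `γ⁻(a,b) = max {β_i⁻(a,b) : i < ρ₂(a,b)}`. -/
def gammaMinusW (e : Ordinal → Set Ordinal) (a b : Ordinal) : Ordinal :=
  sSup (walkLow e a b '' {i : ℕ | i < rho2 e a b})

/-- `η(a,b) = max {β_i⁻(a,b) : i ≤ ρ₂(a,b)}`. -/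
def etaW (e : Ordinal → Set Ordinal) (a b : Ordinal) : Ordinal :=
  sSup (walkLow e a b '' {i : ℕ | i ≤ rho2 e a b})

/-- `e` is a C-sequence on `lam`: each `e ξ` is closed unbounded in `ξ`. -/
def IsCSeq (e : Ordinal → Set Ordinal) (lam : Ordinal) : Prop :=
  ∀ ξ, ξ < lam → IsClubIn (e ξ) ξ

/-- `ξ` is an accumulation point of `C`: `ξ = sup (C ∩ ξ) > 0`. -/
def IsAccOf (C : Set Ordinal) (ξ : Ordinal) : Prop :=
  0 < ξ ∧ sSup (C ∩ Set.Iio ξ) = ξ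

/-- The non-accumulation points of `C`. -/
def naccOf (C : Set Ordinal) : Set Ordinal :=
  {ξ ∈ C | sSup (C ∩ Set.Iio ξ) < ξ}

/-! If the conclusion failed, cofinally many `i < cf μ` would have a threshold `ζ i < μ_i` above
which every fiber `{α ∈ A : f_α(i) = ξ}` is bounded in `μ⁺`. There are at most `μ` such fibers and
`μ⁺` is regular, so a single `γ < μ⁺` bounds all of them. Choose `α₀` with `ζ <* f_α₀` and then
`α ∈ A` above both `α₀` and `γ`: for every large such `i`, `f_α(i) > f_α₀(i) > ζ i`, yet the fiber
of `f_α(i)` contains `α > γ`. -/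

theorem Ordinal.exists_lt_forall_of_card_lt_cof {o c : Ordinal.{u}} (ho : o.card < c.cof)
    {Q : Ordinal.{u} → Ordinal.{u} → Prop} (hQ : ∀ i y z, y ≤ z → Q i y → Q i z)
    (h : ∀ i < o, ∃ y < c, Q i y) : ∃ y < c, ∀ i < o, Q i y := by
  choose g hgc hgQ using fun i : Iio o => h i i.2
  refine ⟨⨆ i, g i, Ordinal.lift_iSup_lt_of_lt_cof ?_ hgc, fun i hi =>
    hQ i _ _ (le_ciSup Ordinal.bddAbove_of_small ⟨i, hi⟩) (hgQ ⟨i, hi⟩)⟩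
  rwa [Cardinal.mk_Iio_ordinal, Cardinal.lift_lift, ← Ordinal.lift_cof, Cardinal.lift_lt]

theorem exists_forall_lt_of_forall_choice {o : Ordinal} {b : Ordinal → Ordinal}
    {G : Ordinal → Ordinal → Prop} (hb : ∀ i, i < o → 0 < b i)
    (h : ∀ ζ : Ordinal → Ordinal, (∀ i, i < o → ζ i < b i) →
      ∃ s, s < o ∧ ∀ i, s ≤ i → i < o → G i (ζ i)) :
    ∃ s, s < o ∧ ∀ i, s ≤ i → i < o → ∀ x, x < b i → G i x := by
  by_contra! hbad
  have hchoice : ∀ i, ∃ x, (i < o → x < b i) ∧ ((∃ x < b i, ¬G i x) → ¬G i x) := by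
    intro i
    by_cases hi : ∃ x < b i, ¬G i x
    · obtain ⟨x, hx, hGx⟩ := hi
      exact ⟨x, fun _ => hx, fun _ => hGx⟩
    · exact ⟨0, hb i, fun h => absurd h hi⟩
  choose ζ hζb hζG using hchoice
  obtain ⟨s, hs, hG⟩ := h ζ hζb
  obtain ⟨i, hsi, hio, hi⟩ := hbad s hs
  exact hζG i hi (hG i hsi hio)

theorem exists_uniform_bound_of_bounded_fibers {mu : Cardinal} (hmu : Cardinal.aleph0 ≤ mu)
    {mus : Ordinal → Cardinal} (hle : ∀ i, i < cofOrd mu → mus i ≤ mu)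
    (f : Ordinal → Ordinal → Ordinal) (A : Set Ordinal) :
    ∃ γ < sucOrd mu, ∀ i < cofOrd mu, ∀ ξ < (mus i).ord,
      (∃ y < sucOrd mu, ∀ α ∈ A, y < α → f α i ≠ ξ) → ∀ α ∈ A, γ < α → f α i ≠ ξ := by
  have hcof : (sucOrd mu).cof = Order.succ mu := (Cardinal.isRegular_succ hmu).cof_ord
  have hpos : 0 < sucOrd mu := (Cardinal.isSuccLimit_ord (hmu.trans (Order.le_succ mu))).bot_lt
  refine Ordinal.exists_lt_forall_of_card_lt_cof ?_
    (fun i y z hyz hy ξ hξ hbdd α hα hzα => hy ξ hξ hbdd α hα (hyz.trans_lt hzα)) fun i hi => ?_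
  · rw [cofOrd, Cardinal.card_ord, hcof]
    exact (Ordinal.cof_ord_le mu).trans_lt (Order.lt_succ mu)
  refine Ordinal.exists_lt_forall_of_card_lt_cof ?_
    (fun ξ y z hyz hy hbdd α hα hzα => hy hbdd α hα (hyz.trans_lt hzα)) fun ξ _ => ?_
  · rw [Cardinal.card_ord, hcof]
    exact (hle i hi).trans_lt (Order.lt_succ mu)
  by_cases hbdd : ∃ y < sucOrd mu, ∀ α ∈ A, y < α → f α i ≠ ξ
  · obtain ⟨y, hy, hyA⟩ := hbdd
    exact ⟨y, hy, fun _ => hyA⟩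
  · exact ⟨0, hpos, fun h => absurd h hbdd⟩

theorem IsScale.exists_unbounded_fiber_above {mu : Cardinal} {mus : Ordinal → Cardinal}
    {f : Ordinal → Ordinal → Ordinal} (hscale : IsScale mu mus f) (hmu : Cardinal.aleph0 ≤ mu)
    {A : Set Ordinal} (hAu : UnbddIn A (sucOrd mu)) {ζ : Ordinal → Ordinal}
    (hζ : ∀ i, i < cofOrd mu → ζ i < (mus i).ord) :
    ∃ istar, istar < cofOrd mu ∧ ∀ i, istar ≤ i → i < cofOrd mu →
      ∃ ξ, ζ i < ξ ∧ ξ < (mus i).ord ∧ ∀ y, y < sucOrd mu → ∃ α ∈ A, y < α ∧ f α i = ξ := by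
  obtain ⟨γ, hγ, hfib⟩ := exists_uniform_bound_of_bounded_fibers hmu hscale.le_mu f A
  obtain ⟨α₀, hα₀, i₀, hi₀, hζα₀⟩ := hscale.f_cofinal ζ hζ
  have hlim : Order.IsSuccLimit (sucOrd mu) :=
    Cardinal.isSuccLimit_ord (hmu.trans (Order.le_succ mu))
  obtain ⟨α, hαA, hα, hαlt⟩ := hAu _ (hlim.succ_lt (max_lt hα₀ hγ))
  have hmax : max α₀ γ < α := (Order.lt_succ _).trans_le hα
  have hγα : γ < α := (le_max_right _ _).trans_lt hmax
  obtain ⟨i₁, hi₁, hmono⟩ := hscale.f_mono α₀ α ((le_max_left _ _).trans_lt hmax) hαlt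
  refine ⟨max i₀ i₁, max_lt hi₀ hi₁, fun i hi hic => ⟨f α i, ?_, hscale.f_lt α hαlt i hic, ?_⟩⟩
  · exact (hζα₀ i ((le_max_left _ _).trans hi) hic).trans
      (hmono i ((le_max_right _ _).trans hi) hic)
  · by_contra hbdd
    push Not at hbdd
    exact hfib i hic (f α i) (hscale.f_lt α hαlt i hic) hbdd α hαA hγα rfl

theorem stmt5_general (mu : Cardinal) (hsing : IsSingular mu)
    (mus : Ordinal → Cardinal) (f : Ordinal → Ordinal → Ordinal)
    (hscale : IsScale mu mus f)
    (A : Set Ordinal) (hAu : UnbddIn A (sucOrd mu)) :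
    ∃ istar, istar < cofOrd mu ∧ ∀ i, istar ≤ i → i < cofOrd mu →
      ∀ ξ₀, ξ₀ < (mus i).ord → ∃ ξ, ξ₀ < ξ ∧ ξ < (mus i).ord ∧
        ∀ y, y < sucOrd mu → ∃ α ∈ A, y < α ∧ f α i = ξ :=
  exists_forall_lt_of_forall_choice (fun i hi => Cardinal.ord_pos.2 (hscale.regular i hi).pos)
    fun _ hζ => hscale.exists_unbounded_fiber_above hsing.1 hAu hζ

/-- For a scale `(mus, f)` on singular `μ` and an unbounded `A ⊆ μ⁺`: for all sufficiently large
`i < cf μ`, the set of `ξ < μ_i` such that `{α ∈ A : f_α(i) = ξ}` is unbounded in `μ⁺` is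
unbounded in `μ_i`. -/
theorem stmt5 (mu : Cardinal) (hsing : IsSingular mu)
    (mus : Ordinal → Cardinal) (f : Ordinal → Ordinal → Ordinal)
    (hscale : IsScale mu mus f)
    (A : Set Ordinal) (hA : A ⊆ Set.Iio (sucOrd mu)) (hAu : UnbddIn A (sucOrd mu)) :
    ∃ istar, istar < cofOrd mu ∧ ∀ i, istar ≤ i → i < cofOrd mu →
      ∀ ξ₀, ξ₀ < (mus i).ord → ∃ ξ, ξ₀ < ξ ∧ ξ < (mus i).ord ∧
        ∀ y, y < sucOrd mu → ∃ α ∈ A, y < α ∧ f α i = ξ :=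
  stmt5_general mu hsing mus f hscale A hAu

end
end

section
/- Let λ be a cardinal and ⟨e_α^m : α < λ, m < ω⟩ a generalized C-sequence on λ. Then for all α < β < λ there is m* < ω such that for every m ≥ m*, the m-walk from β to α coincides with the m*-walk from β to α; that is, ρ₂^m(α, β) = ρ₂^{m*}(α, β) and β_i^m(α, β) = β_i^{m*}(α, β) for all i ≤ ρ₂^{m*}(α, β). -/
noncomputable section

open Set

/-!
The first step `min (e_b^m \ a)` of the `m`-walk from `b` to `a` is non-increasing in `m`,
because the clubs `e_b^m` grow with `m`; ordinals being well-founded, it is eventually constant,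
say equal to `c`. Since `a ≤ c < b`, induction on `b` makes the walks from `c` stabilize as well,
and the walk from `b` is `b` followed by the walk from `c`. The walks agree as whole sequences
(they stay at `a` once they reach it), so `ρ₂` stabilizes too.
-/

section SingleCSequence

variable {e : Ordinal → Set Ordinal} {a b : Ordinal}

lemma walk_self (n : ℕ) : walk e a a n = a := by
  induction n with
  | zero => rfl
  | succ n ih => exact if_pos ih

lemma walk_one_of_ne (h : b ≠ a) : walk e a b 1 = sInf (e b ∩ Ici a) := if_neg h

lemma walk_succ_eq_walk_walk_one (n : ℕ) :
    walk e a b (n + 1) = walk e a (walk e a b 1) n := by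
  induction n with
  | zero => rfl
  | succ n ih => rw [walk, ih]; rfl

lemma walk_one_mem_Ico (hsub : e b ⊆ Iio b) (hunb : UnbddIn (e b) b) (hab : a < b) :
    walk e a b 1 ∈ Ico a b := by
  obtain ⟨y, hy, hay, -⟩ := hunb a hab
  have hmem : sInf (e b ∩ Ici a) ∈ e b ∩ Ici a := csInf_mem ⟨y, hy, hay⟩
  rw [walk_one_of_ne hab.ne']
  exact ⟨hmem.2, hsub hmem.1⟩

end SingleCSequence

section GeneralizedCSequence

variable {e : Ordinal → ℕ → Set Ordinal} {lam a b : Ordinal}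

lemma exists_walk_one_eventually_eq (hmono : Monotone (e b))
    (hunb : ∀ m, UnbddIn (e b m) b) (hab : a < b) :
    ∃ m₀, ∀ m, m₀ ≤ m → walk (fun ξ => e ξ m) a b 1 = walk (fun ξ => e ξ m₀) a b 1 := by
  have hanti : Antitone fun m => walk (fun ξ => e ξ m) a b 1 := by
    intro m n hmn
    obtain ⟨y, hy, hay, -⟩ := hunb m a hab
    simp only [walk_one_of_ne hab.ne']
    exact csInf_le_csInf' ⟨y, hy, hay⟩ (inter_subset_inter_left _ (hmono hmn))
  obtain ⟨m₀, hm₀⟩ := WellFoundedLT.antitone_chain_condition hanti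
  exact ⟨m₀, fun m hm => (hm₀ m hm).symm⟩

theorem exists_walk_eventually_eq (hsub : ∀ ξ < lam, ∀ m, e ξ m ⊆ Iio ξ)
    (hunb : ∀ ξ < lam, ∀ m, UnbddIn (e ξ m) ξ) (hmono : ∀ ξ < lam, Monotone (e ξ))
    (hab : a ≤ b) (hb : b < lam) :
    ∃ m₀, ∀ m, m₀ ≤ m → walk (fun ξ => e ξ m) a b = walk (fun ξ => e ξ m₀) a b := by
  induction b using WellFoundedLT.induction with
  | _ b ih =>
    rcases hab.eq_or_lt with rfl | hab
    · exact ⟨0, fun m _ => funext fun n => by rw [walk_self, walk_self]⟩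
    obtain ⟨m₀, hm₀⟩ := exists_walk_one_eventually_eq (hmono b hb) (hunb b hb) hab
    have hc := walk_one_mem_Ico (e := fun ξ => e ξ m₀) (hsub b hb m₀) (hunb b hb m₀) hab
    obtain ⟨m₁, hm₁⟩ := ih _ hc.2 hc.1 (hc.2.trans hb)
    refine ⟨max m₀ m₁, fun m hm => funext fun n => ?_⟩
    cases n with
    | zero => rfl
    | succ n =>
      rw [walk_succ_eq_walk_walk_one n, walk_succ_eq_walk_walk_one n, hm₀ m (le_of_max_le_left hm),
        hm₀ _ (le_max_left _ _), hm₁ m (le_of_max_le_right hm), hm₁ _ (le_max_right _ _)]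

end GeneralizedCSequence

/-- For a generalized C-sequence, the `m`-walk from `b` to `a` stabilizes: there is `m*` such
that for every `m ≥ m*` the `m`-walk coincides with the `m*`-walk. -/
theorem stmt10 (lam : Cardinal) (e : Ordinal → ℕ → Set Ordinal)
    (hclub : ∀ ξ, ξ < lam.ord → ∀ m, IsClubIn (e ξ m) ξ)
    (hmono : ∀ ξ, ξ < lam.ord → ∀ m, e ξ m ⊆ e ξ (m + 1))
    (a b : Ordinal) (hab : a < b) (hb : b < lam.ord) :
    ∃ mstar : ℕ, ∀ m, mstar ≤ m →
      rho2 (fun ξ => e ξ m) a b = rho2 (fun ξ => e ξ mstar) a b ∧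
      ∀ i, i ≤ rho2 (fun ξ => e ξ mstar) a b →
        walk (fun ξ => e ξ m) a b i = walk (fun ξ => e ξ mstar) a b i := by
  have hsub : ∀ ξ < lam.ord, ∀ m, e ξ m ⊆ Iio ξ := fun ξ hξ m => (hclub ξ hξ m).1
  have hunb : ∀ ξ < lam.ord, ∀ m, UnbddIn (e ξ m) ξ := fun ξ hξ m => (hclub ξ hξ m).2.2
  have hmono' : ∀ ξ < lam.ord, Monotone (e ξ) := fun ξ hξ =>
    monotone_nat_of_le_succ (hmono ξ hξ)
  obtain ⟨m₀, hm₀⟩ := exists_walk_eventually_eq hsub hunb hmono' hab.le hb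
  refine ⟨m₀, fun m hm => ⟨?_, fun i _ => congrFun (hm₀ m hm) i⟩⟩
  rw [rho2, rho2, hm₀ m hm]

end
end

section
/- Let μ be a singular cardinal and (⟨μ_i : i < cf(μ)⟩, ⟨f_α : α < μ⁺⟩) a scale for μ. Then there is a closed unbounded set C ⊆ μ⁺ such that for every β ∈ C there is i* < cf(μ) such that for all i with i* ≤ i < cf(μ), all η < μ_i, and all ν < μ_{i+1}, the set {α < β : f_α(i) > η and f_α(i+1) > ν} is unbounded in β. -/
noncomputable section

open Set

/-! For all large `i < cf μ`, each set `{α : η < f_α(i) ∧ ν < f_α(i+1)}` is unbounded in `μ⁺`: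
otherwise pick counterexamples `(η_i, ν_i, x_i)` for cofinally many `i`; as `cf μ < μ⁺`, some
`α` lies above all `x_i`, and by cofinality and monotonicity of the scale it can be chosen so
that `f_α` eventually dominates both `i ↦ η_i` and `i + 1 ↦ ν_i`, a contradiction.
From then on only `μ` many triples `(i, η, ν)` matter. As `μ⁺` is regular and uncountable, the
`β < μ⁺` below which all these `μ` unbounded sets remain unbounded form a club: closing any
`x < μ⁺` `ω` times under a choice of witnesses stays below `μ⁺`. -/

universe u v

section ScaleClub

open Cardinal

theorem Cardinal.IsRegular.iSup_lt_ord {κ : Cardinal.{u}} (hκ : κ.IsRegular) {ι : Type v}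
    {g : ι → Ordinal.{u}} (hι : Cardinal.lift.{u} #ι < Cardinal.lift.{v} κ)
    (hg : ∀ i, g i < κ.ord) : iSup g < κ.ord :=
  Ordinal.lift_iSup_lt_of_lt_cof (by rwa [← Ordinal.lift_cof, hκ.cof_ord]) hg

def commonAccPoints {ι : Type v} (P : ι → Ordinal.{u} → Prop) (lam : Ordinal.{u}) :
    Set Ordinal.{u} :=
  {β | β < lam ∧ ∀ p, ∀ x < β, ∃ α, x < α ∧ α < β ∧ P p α}

section CommonAccPoints

variable {ι : Type v} (P : ι → Ordinal.{u} → Prop)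

theorem closedIn_commonAccPoints (lam : Ordinal.{u}) :
    ClosedIn (commonAccPoints P lam) lam := by
  intro δ hδ _ hacc
  refine ⟨hδ, fun p x hx => ?_⟩
  obtain ⟨y, hy, hxy, hyδ⟩ := hacc x hx
  obtain ⟨α, hxα, hαy, hPα⟩ := hy.2 p x hxy
  exact ⟨α, hxα, hαy.trans hyδ, hPα⟩

variable {κ : Cardinal.{u}} (hκ : κ.IsRegular) (hκℵ₀ : κ ≠ ℵ₀)
  (hι : lift.{u} #ι < lift.{v} κ)
  (hP : ∀ p, ∀ x < κ.ord, ∃ α, x < α ∧ α < κ.ord ∧ P p α)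
include hκ hκℵ₀ hι hP

theorem unbddIn_commonAccPoints : UnbddIn (commonAccPoints P κ.ord) κ.ord := by
  have hlim : Order.IsSuccLimit κ.ord := isSuccLimit_ord hκ.aleph0_le
  have hwit : ∀ p x, ∃ α < κ.ord, x < κ.ord → x < α ∧ P p α := fun p x => by
    by_cases hx : x < κ.ord
    · obtain ⟨α, hxα, hα, hPα⟩ := hP p x hx
      exact ⟨α, hα, fun _ => ⟨hxα, hPα⟩⟩
    · exact ⟨0, hlim.bot_lt, fun h => absurd h hx⟩
  choose W hWlt hW using hwit
  let H : Ordinal.{u} → Ordinal.{u} := fun γ => ⨆ p, ⨆ y : Set.Iio γ, W p y + 1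
  have hH : ∀ γ < κ.ord, H γ < κ.ord := fun γ hγ => by
    refine hκ.iSup_lt_ord hι fun p => hκ.iSup_lt_ord ?_ fun y => ?_
    · rwa [mk_Iio_ordinal, lift_lift, lift_lt, ← lt_ord]
    · exact hlim.add_one_lt (hWlt p y)
  have hWH : ∀ p γ, ∀ y < γ, W p y < H γ := fun p γ y hy =>
    calc W p y < W p y + 1 := Order.lt_add_one_iff.2 le_rfl
      _ ≤ ⨆ y : Set.Iio γ, W p y + 1 :=
        Ordinal.le_iSup (fun y : Set.Iio γ => W p y + 1) ⟨y, hy⟩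
      _ ≤ H γ := le_ciSup (f := fun p => ⨆ y : Set.Iio γ, W p y + 1)
        ⟨κ.ord, Set.forall_mem_range.2 fun p =>
          Ordinal.iSup_le fun y => (hlim.add_one_lt (hWlt p y)).le⟩ p
  intro x hx
  set β := Ordinal.nfp H (x + 1)
  have hβ : β < κ.ord := nfp_lt_ord_of_isRegular hκ hκℵ₀ hH (hlim.add_one_lt hx)
  have hxβ : x < β := (Order.lt_add_one_iff.2 le_rfl).trans_le (Ordinal.le_nfp H _)
  refine ⟨β, ⟨hβ, fun p y hy => ?_⟩, hxβ.le, hβ⟩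
  obtain ⟨n, hyn⟩ := Ordinal.lt_nfp_iff.1 hy
  obtain ⟨hyW, hPW⟩ := hW p y (hy.trans hβ)
  refine ⟨W p y, hyW, ?_, hPW⟩
  calc W p y < H (H^[n] (x + 1)) := hWH p _ y hyn
    _ = H^[n + 1] (x + 1) := (Function.iterate_succ_apply' H n _).symm
    _ ≤ β := Ordinal.iterate_le_nfp H _ _

theorem isClubIn_commonAccPoints : IsClubIn (commonAccPoints P κ.ord) κ.ord :=
  ⟨fun _ hβ => hβ.1, closedIn_commonAccPoints P _,
    unbddIn_commonAccPoints P hκ hκℵ₀ hι hP⟩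

end CommonAccPoints

variable {mu : Cardinal.{u}}

lemma isSuccLimit_sucOrd (hmu : ℵ₀ ≤ mu) : Order.IsSuccLimit (sucOrd mu) :=
  isSuccLimit_ord (hmu.trans (Order.le_succ mu))

lemma isSuccLimit_cofOrd (hmu : ℵ₀ ≤ mu) : Order.IsSuccLimit (cofOrd mu) :=
  isSuccLimit_ord (Ordinal.aleph0_le_cof_iff.2 (Ordinal.one_lt_cof_iff.2 (isSuccLimit_ord hmu)))

lemma lift_mk_Iio_cofOrd_lt_succ :
    lift.{u} #(Set.Iio (cofOrd mu)) < lift.{u + 1} (Order.succ mu) := by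
  rw [mk_Iio_ordinal, lift_lift, lift_lt, cofOrd, card_ord]
  exact (Ordinal.cof_ord_le mu).trans_lt (Order.lt_succ mu)

lemma lift_mk_lt_succ_of_subset_Iio_prod (hmu : ℵ₀ ≤ mu)
    {T : Set (Ordinal.{u} × Ordinal.{u} × Ordinal.{u})}
    (hT : T ⊆ Set.Iio mu.ord ×ˢ Set.Iio mu.ord ×ˢ Set.Iio mu.ord) :
    lift.{u} #T < lift.{u + 1} (Order.succ mu) := by
  have hle : #T ≤ #(Set.Iio mu.ord × Set.Iio mu.ord × Set.Iio mu.ord) :=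
    mk_le_of_injective (f := fun q => (⟨q.1.1, (hT q.2).1⟩, ⟨q.1.2.1, (hT q.2).2.1⟩,
      ⟨q.1.2.2, (hT q.2).2.2⟩)) fun q q' h => by
      simp only [Prod.mk.injEq, Subtype.mk.injEq] at h
      exact Subtype.ext (Prod.ext h.1 (Prod.ext h.2.1 h.2.2))
  have hcube : #(Set.Iio mu.ord × Set.Iio mu.ord × Set.Iio mu.ord) = lift.{u + 1} mu := by
    have h : ℵ₀ ≤ lift.{u + 1} mu := aleph0_le_lift.2 hmu
    simp only [mk_prod, mk_Iio_ordinal, card_ord, lift_id, mul_eq_self h]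
  calc lift.{u} #T ≤ lift.{u} (lift.{u + 1} mu) := by rw [← hcube]; exact lift_le.2 hle
    _ < lift.{u + 1} (Order.succ mu) := by rw [lift_lift, lift_lt]; exact Order.lt_succ mu

namespace IsScale

variable {mus : Ordinal.{u} → Cardinal.{u}} {f : Ordinal.{u} → Ordinal.{u} → Ordinal.{u}}
  (hf : IsScale mu mus f) (hmu : ℵ₀ ≤ mu)
include hf hmu

theorem exists_gt_eventually_lt {g : Ordinal.{u} → Ordinal.{u}}
    (hg : ∀ i < cofOrd mu, g i < (mus i).ord) {x : Ordinal.{u}} (hx : x < sucOrd mu) :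
    ∃ α, x < α ∧ α < sucOrd mu ∧
      ∃ i₀ < cofOrd mu, ∀ i, i₀ ≤ i → i < cofOrd mu → g i < f α i := by
  obtain ⟨α₀, hα₀, i₀, hi₀, hdom⟩ := hf.f_cofinal g hg
  have hα : max α₀ x + 1 < sucOrd mu := (isSuccLimit_sucOrd hmu).add_one_lt (max_lt hα₀ hx)
  obtain ⟨i₁, hi₁, hmono⟩ := hf.f_mono α₀ _ (Order.lt_add_one_iff.2 (le_max_left _ _)) hα
  refine ⟨_, Order.lt_add_one_iff.2 (le_max_right _ _), hα, max i₀ i₁, max_lt hi₀ hi₁,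
    fun i hi hicof => ?_⟩
  exact (hdom i (le_of_max_le_left hi) hicof).trans (hmono i (le_of_max_le_right hi) hicof)

theorem exists_gt_eventually_lt_pair (a b : Ordinal.{u} → Ordinal.{u}) {x : Ordinal.{u}}
    (hx : x < sucOrd mu) :
    ∃ α, x < α ∧ α < sucOrd mu ∧ ∃ i₀ < cofOrd mu, ∀ i, i₀ ≤ i → i < cofOrd mu →
      a i < (mus i).ord → b i < (mus (i + 1)).ord → a i < f α i ∧ b i < f α (i + 1) := by
  -- `g (i + 1)` bounds `b i` as `pred (i + 1) = i`; truncating at `μ_j` keeps `g j < μ_j`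
  let g : Ordinal.{u} → Ordinal.{u} := fun j =>
    max (if a j < (mus j).ord then a j else 0)
      (if b (Ordinal.pred j) < (mus j).ord then b (Ordinal.pred j) else 0)
  have hg : ∀ j < cofOrd mu, g j < (mus j).ord := fun j hj => by
    have hpos : 0 < (mus j).ord := ord_pos.2 (hf.regular j hj).pos
    apply max_lt <;> split_ifs <;> assumption
  obtain ⟨α, hxα, hα, i₀, hi₀, hdom⟩ := hf.exists_gt_eventually_lt hmu hg hx
  refine ⟨α, hxα, hα, i₀, hi₀, fun i hi hicof hai hbi => ⟨?_, ?_⟩⟩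
  · calc a i ≤ g i := by simp only [g, if_pos hai]; exact le_max_left _ _
      _ < f α i := hdom i hi hicof
  · have hsucc : i + 1 < cofOrd mu := (isSuccLimit_cofOrd hmu).add_one_lt hicof
    calc b i ≤ g (i + 1) := by
          simp only [g, Ordinal.pred_add_one, if_pos hbi]; exact le_max_right _ _
      _ < f α (i + 1) := hdom _ (hi.trans le_self_add) hsucc

theorem eventually_unbounded_pair :
    ∃ istar < cofOrd mu, ∀ i, istar ≤ i → i < cofOrd mu →
      ∀ η < (mus i).ord, ∀ ν < (mus (i + 1)).ord,
        ∀ x < sucOrd mu, ∃ α, x < α ∧ α < sucOrd mu ∧ η < f α i ∧ ν < f α (i + 1) := by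
  by_contra! hbad
  let Bad : Ordinal.{u} → Ordinal.{u} → Ordinal.{u} → Ordinal.{u} → Prop := fun i η ν x =>
    η < (mus i).ord ∧ ν < (mus (i + 1)).ord ∧
      ∀ α, x < α → α < sucOrd mu → η < f α i → f α (i + 1) ≤ ν
  have hchoice : ∀ i, ∃ η ν, ∃ x < sucOrd mu,
      (∃ η' ν', ∃ x' < sucOrd mu, Bad i η' ν' x') → Bad i η ν x := fun i => by
    by_cases h : ∃ η' ν', ∃ x' < sucOrd mu, Bad i η' ν' x'
    · obtain ⟨η, ν, x, hx, hb⟩ := h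
      exact ⟨η, ν, x, hx, fun _ => hb⟩
    · exact ⟨0, 0, 0, (isSuccLimit_sucOrd hmu).bot_lt, fun h' => absurd h' h⟩
  choose η ν x hx hηνx using hchoice
  have hX : ⨆ i : Set.Iio (cofOrd mu), x i < sucOrd mu :=
    (isRegular_succ hmu).iSup_lt_ord lift_mk_Iio_cofOrd_lt_succ fun i => hx i
  obtain ⟨α, hXα, hα, i₀, hi₀, hdom⟩ := hf.exists_gt_eventually_lt_pair hmu η ν hX
  obtain ⟨i, hi, hicof, η', hη', ν', hν', x', hx', hb⟩ := hbad i₀ hi₀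
  obtain ⟨hηi, hνi, hbi⟩ := hηνx i ⟨η', ν', x', hx', hη', hν', hb⟩
  have hxα : x i < α :=
    (Ordinal.le_iSup (fun i : Set.Iio (cofOrd mu) => x i) ⟨i, hicof⟩).trans_lt hXα
  obtain ⟨hηα, hνα⟩ := hdom i hi hicof hηi hνi
  exact (hbi α hxα hα hηα).not_gt hνα

end IsScale

end ScaleClub

/-- For any scale `(mus, f)` on a singular `μ` there is a club `C ⊆ μ⁺` such that for every
`β ∈ C` and all sufficiently large `i < cf μ`: for all `η < μ_i` and `ν < μ_{i+1}`, the set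
`{α < β : f_α(i) > η ∧ f_α(i+1) > ν}` is unbounded in `β`. -/
theorem stmt11 (mu : Cardinal) (hsing : IsSingular mu)
    (mus : Ordinal → Cardinal) (f : Ordinal → Ordinal → Ordinal)
    (hscale : IsScale mu mus f) :
    ∃ C : Set Ordinal, IsClubIn C (sucOrd mu) ∧
      ∀ β ∈ C, ∃ istar, istar < cofOrd mu ∧
        ∀ i, istar ≤ i → i < cofOrd mu →
          ∀ η, η < (mus i).ord → ∀ ν, ν < (mus (i + 1)).ord →
            ∀ x, x < β → ∃ α, x < α ∧ α < β ∧ η < f α i ∧ ν < f α (i + 1) := by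
  have hmu : Cardinal.aleph0 ≤ mu := hsing.1
  obtain ⟨istar, histar, hunbdd⟩ := hscale.eventually_unbounded_pair hmu
  let T : Set (Ordinal × Ordinal × Ordinal) := {q | istar ≤ q.1 ∧ q.1 < cofOrd mu ∧
    q.2.1 < (mus q.1).ord ∧ q.2.2 < (mus (q.1 + 1)).ord}
  have hmus : ∀ j < cofOrd mu, (mus j).ord ≤ mu.ord := fun j hj =>
    Cardinal.ord_le_ord.2 (hscale.le_mu j hj)
  have hT : T ⊆ Set.Iio mu.ord ×ˢ Set.Iio mu.ord ×ˢ Set.Iio mu.ord := by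
    rintro ⟨i, η, ν⟩ ⟨-, hi, hη, hν⟩
    exact ⟨hi.trans_le (Cardinal.ord_le_ord.2 (Ordinal.cof_ord_le mu)), hη.trans_le (hmus i hi),
      hν.trans_le (hmus _ ((isSuccLimit_cofOrd hmu).add_one_lt hi))⟩
  let P : T → Ordinal → Prop := fun q α => q.1.2.1 < f α q.1.1 ∧ q.1.2.2 < f α (q.1.1 + 1)
  have hclub : IsClubIn (commonAccPoints P (sucOrd mu)) (sucOrd mu) :=
    isClubIn_commonAccPoints P (Cardinal.isRegular_succ hmu)
      (hmu.trans_lt (Order.lt_succ mu)).ne' (lift_mk_lt_succ_of_subset_Iio_prod hmu hT)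
      fun ⟨⟨i, η, ν⟩, hi, hicof, hη, hν⟩ x hx => hunbdd i hi hicof η hη ν hν x hx
  exact ⟨_, hclub, fun β hβ => ⟨istar, histar, fun i hi hicof η hη ν hν x hx =>
    hβ.2 ⟨(i, η, ν), hi, hicof, hη, hν⟩ x hx⟩⟩

end
end

section
/- Let λ be a cardinal, ⟨e_ξ : ξ < λ⟩ a C-sequence on λ, and α < β < λ. Suppose α' is an ordinal with γ⁻(α, β) < α' ≤ α and α' ∈ e_{γ(α,β)}. Then: β_i(α', β) = β_i(α, β) for all i < ρ₂(α, β); ρ₂(α', β) = ρ₂(α, β); and γ(α', β) = γ(α, β). If in addition α' is a limit ordinal with cf(α') > |e_{γ(α,β)}|, then α' is not an accumulation point of e_{γ(α,β)} and η(α', β) < α'. -/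
noncomputable section

open Set

/-!
Every element of `e_{β_i(α,β)}` below `α` is at most `β_{i+1}⁻(α,β)`, which for `i + 1 < ρ₂(α,β)`
is at most `γ⁻(α,β) < α'`. Hence up to `γ(α,β)` each step of the walk to `α'` picks the same least
element as the walk to `α`, and from `γ(α,β)` the walk to `α'` steps straight to `α' ∈ e_γ`.
For the second part, a set of fewer than `cf α'` ordinals below `α'` has supremum below `α'`;
this bounds the last term `sup (e_γ ∩ α')` of `η(α',β)`, while the earlier terms are at most
`γ⁻(α,β)`.
-/

universe u

lemma UnbddIn.sInf_inter_Ici_mem_Ico {C : Set Ordinal} {ξ a : Ordinal} (hC : UnbddIn C ξ)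
    (ha : a < ξ) : sInf (C ∩ Ici a) ∈ Ico a ξ := by
  obtain ⟨y, hy, hay, hyξ⟩ := hC a ha
  have hy' : y ∈ C ∩ Ici a := ⟨hy, hay⟩
  exact ⟨(csInf_mem ⟨y, hy'⟩).2, (csInf_le' hy').trans_lt hyξ⟩

lemma inter_Ici_eq_of_sSup_inter_Iio_lt {C : Set Ordinal} {a a' : Ordinal} (h : a' ≤ a)
    (hC : sSup (C ∩ Iio a) < a') : C ∩ Ici a' = C ∩ Ici a := by
  refine Subset.antisymm ?_ (inter_subset_inter_right _ (Ici_subset_Ici.2 h))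
  rintro x ⟨hx, hax⟩
  refine ⟨hx, mem_Ici.2 (not_lt.1 fun hxa ↦ ?_)⟩
  have hx' : x ∈ C ∩ Iio a := ⟨hx, hxa⟩
  exact (le_csSup ⟨a, fun _ hy ↦ hy.2.le⟩ hx').not_gt (hC.trans_le hax)

lemma sSup_inter_Iio_lt_of_mk_lt_cof {C : Set Ordinal.{u}} {a : Ordinal.{u}}
    (hC : Cardinal.mk C < Cardinal.lift.{u + 1} a.cof) : sSup (C ∩ Iio a) < a := by
  refine Ordinal.sSup_lt_of_lt_cof ?_ fun _ hx ↦ hx.2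
  rw [← Ordinal.lift_cof]
  exact (Cardinal.mk_le_mk_of_subset inter_subset_left).trans_lt hC

lemma not_isAccOf_of_mk_lt_cof {C : Set Ordinal.{u}} {a : Ordinal.{u}}
    (hC : Cardinal.mk C < Cardinal.lift.{u + 1} a.cof) : ¬ IsAccOf C a :=
  fun hacc ↦ (sSup_inter_Iio_lt_of_mk_lt_cof hC).ne hacc.2

section Walk

variable {e : Ordinal.{u} → Set Ordinal.{u}} {L a a' b : Ordinal.{u}} {k n : ℕ}

lemma walk_succ_of_ne (h : walk e a b n ≠ a) :
    walk e a b (n + 1) = sInf (e (walk e a b n) ∩ Ici a) :=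
  if_neg h

lemma walk_succ_mem_Ico (hC : IsCSeq e L) (hL : walk e a b n < L) (ha : a < walk e a b n) :
    walk e a b (n + 1) ∈ Ico a (walk e a b n) := by
  rw [walk_succ_of_ne ha.ne']
  exact (hC _ hL).2.2.sInf_inter_Ici_mem_Ico ha

lemma walk_mem_Icc (hC : IsCSeq e L) (hab : a ≤ b) (hb : b < L) (n : ℕ) :
    walk e a b n ∈ Icc a b := by
  induction n with
  | zero => exact ⟨hab, le_rfl⟩
  | succ n ih =>
    rcases ih.1.eq_or_lt with ha | ha
    · rw [walk, if_pos ha.symm]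
      exact ⟨le_rfl, hab⟩
    · have hstep := walk_succ_mem_Ico hC (ih.2.trans_lt hb) ha
      exact ⟨hstep.1, hstep.2.le.trans ih.2⟩

lemma exists_walk_eq (hC : IsCSeq e L) (hab : a ≤ b) (hb : b < L) : ∃ n, walk e a b n = a := by
  by_contra! hne
  refine not_strictAnti_of_wellFoundedLT (walk e a b) (strictAnti_nat_of_succ_lt fun n ↦ ?_)
  have hn := walk_mem_Icc hC hab hb n
  exact (walk_succ_mem_Ico hC (hn.2.trans_lt hb) (hn.1.lt_of_ne (hne n).symm)).2

lemma walk_rho2 (hC : IsCSeq e L) (hab : a ≤ b) (hb : b < L) : walk e a b (rho2 e a b) = a :=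
  Nat.sInf_mem (exists_walk_eq hC hab hb)

lemma lt_walk_of_lt_rho2 (hC : IsCSeq e L) (hab : a ≤ b) (hb : b < L) (hn : n < rho2 e a b) :
    a < walk e a b n :=
  (walk_mem_Icc hC hab hb n).1.lt_of_ne (Ne.symm (Nat.notMem_of_lt_sInf hn))

lemma rho2_pos (hC : IsCSeq e L) (hab : a < b) (hb : b < L) : 0 < rho2 e a b :=
  Nat.pos_of_ne_zero fun h ↦ hab.ne' (by simpa [h, walk] using walk_rho2 hC hab.le hb)

lemma gammaW_eq_walk (hk : rho2 e a b = k + 1) : gammaW e a b = walk e a b k := by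
  rw [gammaW, hk, Nat.add_sub_cancel]

lemma walkLow_le_gammaMinusW (hn : n < rho2 e a b) : walkLow e a b n ≤ gammaMinusW e a b :=
  le_csSup ((finite_Iio _).image _).bddAbove ⟨n, hn, rfl⟩

lemma walk_eq_walk_of_gammaMinusW_lt (hC : IsCSeq e L) (hab : a ≤ b) (hb : b < L)
    (hlow : gammaMinusW e a b < a') (ha' : a' ≤ a) :
    ∀ n < rho2 e a b, walk e a' b n = walk e a b n := by
  intro n hn
  induction n with
  | zero => rfl
  | succ n ih =>
    have hn' : n < rho2 e a b := n.lt_succ_self.trans hn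
    have ha := lt_walk_of_lt_rho2 hC hab hb hn'
    have hsup : sSup (e (walk e a b n) ∩ Iio a) < a' :=
      (walkLow_le_gammaMinusW (n := n + 1) hn).trans_lt hlow
    rw [walk_succ_of_ne (ih hn' ▸ (ha'.trans_lt ha).ne'), walk_succ_of_ne ha.ne', ih hn',
      inter_Ici_eq_of_sSup_inter_Iio_lt ha' hsup]

lemma rho2_eq_of_walk_eq (h : walk e a b n = a) (hne : ∀ i < n, walk e a b i ≠ a) :
    rho2 e a b = n :=
  le_antisymm (Nat.sInf_le h)
    (le_of_not_gt fun hlt ↦ hne _ hlt (Nat.sInf_mem (s := {i | walk e a b i = a}) ⟨n, h⟩))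

lemma walk_rho2_eq_of_mem_gammaW (hC : IsCSeq e L) (hab : a < b) (hb : b < L)
    (hlow : gammaMinusW e a b < a') (ha' : a' ≤ a) (hmem : a' ∈ e (gammaW e a b)) :
    walk e a' b (rho2 e a b) = a' := by
  obtain ⟨k, hk⟩ := Nat.exists_eq_add_one_of_ne_zero (rho2_pos hC hab hb).ne'
  have hkρ : k < rho2 e a b := hk ▸ k.lt_succ_self
  have hagree := walk_eq_walk_of_gammaMinusW_lt hC hab.le hb hlow ha' k hkρ
  rw [hk, walk_succ_of_ne (hagree ▸ (ha'.trans_lt (lt_walk_of_lt_rho2 hC hab.le hb hkρ)).ne'),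
    hagree, ← gammaW_eq_walk hk]
  exact IsLeast.csInf_eq ⟨⟨hmem, self_mem_Ici⟩, fun _ hx ↦ hx.2⟩

lemma walkLow_succ_le_of_eq (ha' : a' ≤ a) (hwalk : walk e a' b n = walk e a b n) :
    walkLow e a' b (n + 1) ≤ walkLow e a b (n + 1) := by
  simp only [walkLow, hwalk]
  exact csSup_le_csSup' ⟨a, fun _ hx ↦ hx.2.le⟩
    (inter_subset_inter_right _ (Iio_subset_Iio ha'))

lemma etaW_lt_of_mem_gammaW (hC : IsCSeq e L) (hab : a < b) (hb : b < L)
    (hlow : gammaMinusW e a b < a') (ha' : a' ≤ a) (hρ : rho2 e a' b = rho2 e a b)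
    (hcf : Cardinal.mk ↥(e (gammaW e a b)) < Cardinal.lift.{u + 1} a'.cof) :
    etaW e a' b < a' := by
  have hagree := walk_eq_walk_of_gammaMinusW_lt hC hab.le hb hlow ha'
  have hterm : ∀ n ≤ rho2 e a b, walkLow e a' b n < a' := by
    rintro (_ | n) hn
    · exact zero_le.trans_lt hlow
    have hnρ : n < rho2 e a b := hn
    rcases hn.lt_or_eq with hn' | hn'
    · exact (walkLow_succ_le_of_eq ha' (hagree n hnρ)).trans_lt
        ((walkLow_le_gammaMinusW hn').trans_lt hlow)
    · rw [walkLow, hagree n hnρ, ← gammaW_eq_walk hn'.symm]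
      exact sSup_inter_Iio_lt_of_mk_lt_cof hcf
  rw [etaW, hρ, ((finite_le_nat _).image _).csSup_lt_iff ⟨_, 0, Nat.zero_le _, rfl⟩]
  rintro _ ⟨n, hn, rfl⟩
  exact hterm n hn

end Walk

/-- If `γ⁻(α,β) < α' ≤ α` and `α' ∈ e_{γ(α,β)}`, then the walk to `α'` agrees with the walk to
`α` below `ρ₂(α,β)`, has the same length and the same last step `γ`.  If moreover `α'` is a limit
ordinal of cofinality greater than `|e_{γ(α,β)}|`, then `α'` is not an accumulation point of
`e_{γ(α,β)}` and `η(α',β) < α'`. -/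
theorem stmt12 (lam : Cardinal) (e : Ordinal → Set Ordinal)
    (hC : IsCSeq e lam.ord) (a b : Ordinal) (hab : a < b) (hb : b < lam.ord)
    (a' : Ordinal) (h1 : gammaMinusW e a b < a') (h2 : a' ≤ a)
    (h3 : a' ∈ e (gammaW e a b)) :
    (∀ i, i < rho2 e a b → walk e a' b i = walk e a b i) ∧
    rho2 e a' b = rho2 e a b ∧
    gammaW e a' b = gammaW e a b ∧
    (Order.IsSuccLimit a' →
      (Cardinal.mk ↥(e (gammaW e a b)) : Cardinal.{1}) < Cardinal.lift.{1, 0} (Ordinal.cof a') →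
      ¬ IsAccOf (e (gammaW e a b)) a' ∧ etaW e a' b < a') := by
  have hagree := walk_eq_walk_of_gammaMinusW_lt hC hab.le hb h1 h2
  have hρ : rho2 e a' b = rho2 e a b :=
    rho2_eq_of_walk_eq (walk_rho2_eq_of_mem_gammaW hC hab hb h1 h2 h3) fun n hn ↦ by
      rw [hagree n hn]
      exact (h2.trans_lt (lt_walk_of_lt_rho2 hC hab.le hb hn)).ne'
  have hγ : gammaW e a' b = gammaW e a b := by
    rw [gammaW, hρ, hagree _ (Nat.sub_lt (rho2_pos hC hab hb) one_pos), gammaW]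
  exact ⟨hagree, hρ, hγ, fun _ hcf ↦
    ⟨not_isAccOf_of_mk_lt_cof hcf, etaW_lt_of_mem_gammaW hC hab hb h1 h2 hρ hcf⟩⟩
end
end

section
/- Let μ be a singular cardinal, (⟨μ_i : i < cf(μ)⟩, ⟨f_α : α < μ⁺⟩) a scale for μ, and ⟨s_α : α < μ⁺⟩ a sequence of pairwise disjoint nonempty subsets of μ⁺, each of cardinality less than cf(μ). Then there exist an unbounded set J ⊆ μ⁺ and an index i₀ < cf(μ) such that: (a) for all α < β in J, sup(s_α) < min(s_β); (b) α ≤ min(s_α) for all α ∈ J; and (c) for all α ∈ J, all ε ∈ s_α, and all i with i₀ ≤ i < cf(μ), f_{min(s_α)}(i) ≤ f_ε(i). -/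
noncomputable section

open Set

/-! Since the `s_α` are disjoint, `α ↦ min s_α` is injective on `μ⁺`, so for each `β < μ⁺`
the `α` with `min s_α ≤ β` are bounded below `μ⁺`; closure points of this bound give
`α ≤ min s_α` unboundedly often. Each `s_α` has fewer than `cf μ` elements, so one index
`i_α < cf μ` witnesses `f_{min s_α} ≤ f_ε` for all `ε ∈ s_α` at once, and as there are only
`cf μ < μ⁺` indices, one value `i₀` occurs unboundedly often. By regularity `sup s_α < μ⁺`, and
taking the first suitable `α` above each closure point of `α ↦ sup s_α` separates the family. -/

universe u

section Regular

open Cardinal Order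

theorem sSup_lt_of_mk_lt_cof {o : Ordinal.{u}} {S : Set Ordinal.{u}} (hS : S ⊆ Iio o)
    (hc : #S < Cardinal.lift.{u + 1} o.cof) : sSup S < o :=
  Ordinal.sSup_lt_of_lt_cof (by rwa [← Ordinal.lift_cof]) hS

variable {κ : Cardinal.{u}}

theorem sSup_lt_ord_of_isRegular (hκ : κ.IsRegular) {S : Set Ordinal.{u}} (hS : S ⊆ Iio κ.ord)
    (hc : #S < Cardinal.lift.{u + 1} κ) : sSup S < κ.ord :=
  sSup_lt_of_mk_lt_cof hS (by rwa [hκ.cof_ord])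

theorem sSup_image_Iio_lt_ord_of_isRegular (hκ : κ.IsRegular) {F : Ordinal.{u} → Ordinal.{u}}
    (hF : MapsTo F (Iio κ.ord) (Iio κ.ord)) {c : Ordinal.{u}} (hc : c < κ.ord) :
    sSup (F '' Iio c) < κ.ord := by
  refine sSup_lt_ord_of_isRegular hκ (image_subset_iff.2 fun y hy => hF (hy.trans hc)) ?_
  calc #(F '' Iio c) ≤ #(Iio c) := mk_image_le
    _ = Cardinal.lift c.card := mk_Iio_ordinal c
    _ < Cardinal.lift κ := lift_lt.2 (lt_ord.1 hc)

theorem exists_closed_under_of_isRegular (hκ : κ.IsRegular) (hκ₁ : ℵ₀ < κ)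
    {F : Ordinal.{u} → Ordinal.{u}} (hF : MapsTo F (Iio κ.ord) (Iio κ.ord))
    {x : Ordinal.{u}} (hx : x < κ.ord) : ∃ δ, x < δ ∧ δ < κ.ord ∧ ∀ y < δ, F y < δ := by
  have hlim : IsSuccLimit κ.ord := isSuccLimit_ord hκ.aleph0_le
  set G : Ordinal.{u} → Ordinal.{u} := fun c => succ (sSup (F '' Iio c))
  have hG : ∀ c < κ.ord, G c < κ.ord := fun c hc =>
    hlim.succ_lt (sSup_image_Iio_lt_ord_of_isRegular hκ hF hc)
  refine ⟨Ordinal.nfp G (succ x), (lt_succ x).trans_le (Ordinal.le_nfp _ _),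
    nfp_lt_ord_of_isRegular hκ hκ₁.ne' hG (hlim.succ_lt hx), fun y hy => ?_⟩
  obtain ⟨n, hn⟩ := Ordinal.lt_nfp_iff.1 hy
  calc F y ≤ sSup (F '' Iio (G^[n] (succ x))) :=
        le_csSup Ordinal.bddAbove_of_small (mem_image_of_mem F hn)
    _ < G^[n + 1] (succ x) := by rw [Function.iterate_succ_apply']; exact lt_succ _
    _ ≤ Ordinal.nfp G (succ x) := Ordinal.iterate_le_nfp G _ _

theorem unbddIn_setOf_le_of_injOn (hκ : κ.IsRegular) (hκ₁ : ℵ₀ < κ)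
    {m : Ordinal.{u} → Ordinal.{u}} (hinj : InjOn m (Iio κ.ord)) :
    UnbddIn {α | α < κ.ord ∧ α ≤ m α} κ.ord := by
  have hlim : IsSuccLimit κ.ord := isSuccLimit_ord hκ.aleph0_le
  -- A closure point `δ` of `h` with `m δ < δ` would lie in the fibre over `m δ`, so `δ ≤ h (m δ)`.
  set h : Ordinal.{u} → Ordinal.{u} := fun β => sSup {α | α < κ.ord ∧ m α ≤ β}
  have hh : MapsTo h (Iio κ.ord) (Iio κ.ord) := by
    intro β hβ
    refine sSup_lt_ord_of_isRegular hκ (fun α hα => hα.1) ?_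
    have hsucc : succ β < κ.ord := hlim.succ_lt hβ
    calc #{α | α < κ.ord ∧ m α ≤ β}
        = #(m '' {α | α < κ.ord ∧ m α ≤ β}) :=
          (mk_image_eq_of_injOn _ _ (hinj.mono fun α hα => hα.1)).symm
      _ ≤ #(Iio (succ β)) := mk_le_mk_of_subset (by
          rintro _ ⟨α, hα, rfl⟩
          exact lt_succ_iff.2 hα.2)
      _ = Cardinal.lift (succ β).card := mk_Iio_ordinal _
      _ < Cardinal.lift κ := lift_lt.2 (lt_ord.1 hsucc)
  intro x hx
  obtain ⟨δ, hxδ, hδ, hclosed⟩ := exists_closed_under_of_isRegular hκ hκ₁ hh hx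
  refine ⟨δ, ⟨hδ, ?_⟩, hxδ.le, hδ⟩
  by_contra! hlt
  have hδh : δ ≤ h (m δ) := le_csSup ⟨κ.ord, fun _ hα => hα.1.le⟩ ⟨hδ, le_rfl⟩
  exact (hclosed _ hlt).not_ge hδh

theorem exists_unbddIn_fiber_of_isRegular (hκ : κ.IsRegular) {A : Set Ordinal.{u}}
    (hA : UnbddIn A κ.ord) {θ : Ordinal.{u}} (hθ : θ.card < κ) {I : Ordinal.{u} → Ordinal.{u}}
    (hI : ∀ α ∈ A, I α < θ) : ∃ i < θ, UnbddIn {α ∈ A | I α = i} κ.ord := by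
  by_contra! hbdd
  simp only [UnbddIn, not_forall, not_exists, not_and, not_lt] at hbdd
  choose! b hb hbound using hbdd
  have hsup : sSup (b '' Iio θ) < κ.ord := by
    refine sSup_lt_ord_of_isRegular hκ (image_subset_iff.2 fun i hi => hb i hi) ?_
    calc #(b '' Iio θ) ≤ #(Iio θ) := mk_image_le
      _ = Cardinal.lift θ.card := mk_Iio_ordinal θ
      _ < Cardinal.lift κ := lift_lt.2 hθ
  obtain ⟨α, hαA, hsupα, hα⟩ := hA _ hsup
  have hbα : b (I α) ≤ α :=
    (le_csSup ⟨κ.ord, image_subset_iff.2 fun i hi => (hb i hi).le⟩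
      (mem_image_of_mem b (hI α hαA))).trans hsupα
  exact (hbound _ (hI α hαA) α ⟨hαA, rfl⟩ hbα).not_gt hα

theorem exists_unbddIn_subset_forall_lt (hκ : κ.IsRegular) (hκ₁ : ℵ₀ < κ)
    {B : Set Ordinal.{u}} (hB : UnbddIn B κ.ord)
    {H : Ordinal.{u} → Ordinal.{u}} (hH : MapsTo H (Iio κ.ord) (Iio κ.ord)) :
    ∃ J ⊆ B, UnbddIn J κ.ord ∧ ∀ α ∈ J, ∀ β ∈ J, α < β → H α < β := by
  refine ⟨{β ∈ B | ∀ α ∈ B, α < β → H α < β}, fun β hβ => hβ.1, ?_,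
    fun α hα β hβ hαβ => hβ.2 α hα.1 hαβ⟩
  intro x hx
  obtain ⟨δ, hxδ, hδ, hclosed⟩ := exists_closed_under_of_isRegular hκ hκ₁ hH hx
  obtain ⟨b, hbB, hδb, hb⟩ := hB δ hδ
  -- the least element of `B` above a closure point of `H` is separated from all smaller ones
  set β := sInf {b ∈ B | δ ≤ b}
  have hβ : β ∈ {b ∈ B | δ ≤ b} := csInf_mem (s := {b ∈ B | δ ≤ b}) ⟨b, hbB, hδb⟩
  refine ⟨β, ⟨hβ.1, fun α hαB hαβ => (hclosed α ?_).trans_le hβ.2⟩,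
    hxδ.le.trans hβ.2, (csInf_le' (s := {b ∈ B | δ ≤ b}) ⟨hbB, hδb⟩).trans_lt hb⟩
  by_contra! hδα
  exact (csInf_le' (s := {b ∈ B | δ ≤ b}) ⟨hαB, hδα⟩).not_gt hαβ

end Regular

theorem IsScale.exists_index_forall_le {mu : Cardinal} {mus : Ordinal → Cardinal}
    {f : Ordinal → Ordinal → Ordinal} (hscale : IsScale mu mus f) {t : Set Ordinal}
    (ht : t ⊆ Iio (sucOrd mu)) (hcard : CardLT t (Ordinal.cof mu.ord)) {γ : Ordinal}
    (hγ : ∀ ε ∈ t, γ ≤ ε) :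
    ∃ i₀ < cofOrd mu, ∀ ε ∈ t, ∀ i, i₀ ≤ i → i < cofOrd mu → f γ i ≤ f ε i := by
  have hdom : ∀ ε ∈ t ∩ Ioi γ, ∃ i₀ < cofOrd mu,
      ∀ i, i₀ ≤ i → i < cofOrd mu → f γ i < f ε i :=
    fun ε hε => hscale.f_mono γ ε hε.2 (ht hε.1)
  choose! g hg hgdom using hdom
  have hsup : sSup (g '' (t ∩ Ioi γ)) < cofOrd mu := by
    refine sSup_lt_of_mk_lt_cof (image_subset_iff.2 hg) ?_
    rw [cofOrd, Ordinal.cof_ord_cof]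
    exact Cardinal.mk_image_le.trans_lt
      ((Cardinal.mk_le_mk_of_subset inter_subset_left).trans_lt hcard)
  refine ⟨_, hsup, fun ε hε i hi hilt => ?_⟩
  rcases (hγ ε hε).eq_or_lt with rfl | hlt
  · exact le_rfl
  · have hgε : g ε ≤ sSup (g '' (t ∩ Ioi γ)) :=
      le_csSup ⟨cofOrd mu, image_subset_iff.2 fun ε hε => (hg ε hε).le⟩
        (mem_image_of_mem g ⟨hε, hlt⟩)
    exact (hgdom ε ⟨hε, hlt⟩ i (hgε.trans hi) hilt).le

/-- Given a scale and a pairwise disjoint family `⟨s_α : α < μ⁺⟩` of nonempty sets of size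
`< cf μ`, there is an unbounded `J ⊆ μ⁺` and `i₀ < cf μ` such that on `J` the family is
separated (`sup s_α < min s_β` for `α < β`), `α ≤ min s_α`, and `f_{min s_α}(i) ≤ f_ε(i)` for
all `ε ∈ s_α` and all `i ∈ [i₀, cf μ)`. -/
theorem stmt13 (mu : Cardinal) (hsing : IsSingular mu)
    (mus : Ordinal → Cardinal) (f : Ordinal → Ordinal → Ordinal)
    (hscale : IsScale mu mus f)
    (s : Ordinal → Set Ordinal)
    (hne : ∀ a, a < sucOrd mu → (s a).Nonempty)
    (hsub : ∀ a, a < sucOrd mu → s a ⊆ Set.Iio (sucOrd mu))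
    (hdisj : ∀ a b, a < sucOrd mu → b < sucOrd mu → a ≠ b → Disjoint (s a) (s b))
    (hcard : ∀ a, a < sucOrd mu → CardLT (s a) (Ordinal.cof mu.ord)) :
    ∃ J : Set Ordinal, J ⊆ Set.Iio (sucOrd mu) ∧ UnbddIn J (sucOrd mu) ∧
      ∃ i₀, i₀ < cofOrd mu ∧
        (∀ a ∈ J, ∀ b ∈ J, a < b → sSup (s a) < sInf (s b)) ∧
        (∀ a ∈ J, a ≤ sInf (s a)) ∧
        (∀ a ∈ J, ∀ ε ∈ s a, ∀ i, i₀ ≤ i → i < cofOrd mu →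
          f (sInf (s a)) i ≤ f ε i) := by
  have hκ : (Order.succ mu).IsRegular := Cardinal.isRegular_succ hsing.1
  have hκ₁ : Cardinal.aleph0 < Order.succ mu := hsing.1.trans_lt (Order.lt_succ mu)
  have hcof : Ordinal.cof mu.ord < Order.succ mu :=
    (Ordinal.cof_ord_le mu).trans_lt (Order.lt_succ mu)
  have hinj : InjOn (fun a => sInf (s a)) (Iio (sucOrd mu)) := fun a ha b hb hab => by
    by_contra hab'
    exact disjoint_left.1 (hdisj a b ha hb hab') (csInf_mem (hne a ha))
      ((show sInf (s a) = sInf (s b) from hab) ▸ csInf_mem (hne b hb))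
  have hsup : MapsTo (fun a => sSup (s a)) (Iio (sucOrd mu)) (Iio (sucOrd mu)) :=
    fun a ha => sSup_lt_ord_of_isRegular hκ (hsub a ha)
      ((hcard a ha).trans (Cardinal.lift_lt.2 hcof))
  choose! I hI hIdom using fun a ha => hscale.exists_index_forall_le (hsub a ha) (hcard a ha)
    fun ε hε => csInf_le' (s := s a) hε
  obtain ⟨i₀, hi₀, hB⟩ := exists_unbddIn_fiber_of_isRegular hκ
    (unbddIn_setOf_le_of_injOn hκ hκ₁ hinj) (by rwa [cofOrd, Cardinal.card_ord])
    (fun α hα => hI α hα.1)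
  obtain ⟨J, hJB, hJ, hsep⟩ := exists_unbddIn_subset_forall_lt hκ hκ₁ hB hsup
  refine ⟨J, fun a ha => (hJB ha).1.1, hJ, i₀, hi₀,
    fun a ha b hb hab => (hsep a ha b hb hab).trans_le (hJB hb).1.2,
    fun a ha => (hJB ha).1.2, fun a ha ε hε i hi hilt => ?_⟩
  exact hIdom a (hJB ha).1.1 ε hε i ((hJB ha).2 ▸ hi) hilt

end
end
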